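/- Let n = 1 and suppose 1 < q < 2 and 0 < b < q−1, or q > 2 and b > q−1. Let k_b ∈ (0,1) be the unique zero of ψ(k) = 1 + b·k^q − b·k^{q−2} − k^{2q−2} in (0,1), and set μ_b := (1 + b·k_b^q)^{−1/(2q−2)}. Then the three pairs (u₀, u₀)·(1+b)^{−1/(2q−2)}, (μ_b·u₀, μ_b·k_b·u₀), and (μ_b·k_b·u₀, μ_b·u₀) are three pairwise distinct positive solutions of the system −u''(r) + u(r) = u(r)^{2q−1} + b·u(r)^{q−1} v(r)^q and −v''(r) + v(r) = v(r)^{2q−1} + b·v(r)^{q−1} u(r)^q for r > 0, with u'(0) = v'(0) = 0, u, v > 0, and u(r), v(r) → 0 as r → ∞. In particular uniqueness of positive solutions fails. -/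

import Mathlib

open Real Set Filter

/-- `u` is twice continuously differentiable on `[0,∞)`, with first and second
derivative functions `u'` and `u''`. -/
def C2 (u u' u'' : ℝ → ℝ) : Prop :=
  (∀ r ∈ Set.Ici (0:ℝ), HasDerivWithinAt u (u' r) (Set.Ici 0) r) ∧
  (∀ r ∈ Set.Ici (0:ℝ), HasDerivWithinAt u' (u'' r) (Set.Ici 0) r) ∧
  ContinuousOn u'' (Set.Ici 0)

/-- `(u,v)` (with derivative data) is a positive solution of the one-dimensional
nonlinear Schrödinger system `-u'' + u = u^{2q-1} + b u^{q-1} v^q`,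
`-v'' + v = v^{2q-1} + b v^{q-1} u^q` on `(0,∞)`,
with `u'(0) = v'(0) = 0`, `u, v > 0` and `u(r), v(r) → 0` as `r → ∞`. -/
def IsPosSolNLS1 (q b : ℝ) (u u' u'' v v' v'' : ℝ → ℝ) : Prop :=
  C2 u u' u'' ∧ C2 v v' v'' ∧
  (∀ r : ℝ, 0 ≤ r → 0 < u r ∧ 0 < v r) ∧
  (∀ r : ℝ, 0 < r → -u'' r + u r = u r ^ (2 * q - 1) + b * u r ^ (q - 1) * v r ^ q) ∧
  (∀ r : ℝ, 0 < r → -v'' r + v r = v r ^ (2 * q - 1) + b * v r ^ (q - 1) * u r ^ q) ∧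
  u' 0 = 0 ∧ v' 0 = 0 ∧
  Tendsto u atTop (nhds 0) ∧ Tendsto v atTop (nhds 0)

/-! Every pair `(A u₀, B u₀)` with constants `A, B > 0` solves the system as soon as `(A, B)` solves
the algebraic system `A^(2q-2) + b A^(q-2) B^q = 1 = B^(2q-2) + b B^(q-2) A^q`, because the
coupled nonlinearity is homogeneous of degree `2q - 1`. Rescaling `(1, 1)` and `(1, k)` by
`μ = s^(-1/(2q-2))`, with `s = 1 + b` resp. `s = 1 + b k^q`, produces such constants; for `(k, 1)`
the equation `ψ(k) = 0` says exactly that the same `s` works. The three pairs are distinct since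
`μ_b k_b < μ_b` and `(1 + b)^(-1/(2q-2)) < μ_b`. -/

def IsPosSolScalar (q : ℝ) (u u' u'' : ℝ → ℝ) : Prop :=
  C2 u u' u'' ∧ (∀ r : ℝ, 0 ≤ r → 0 < u r) ∧
  (∀ r : ℝ, 0 < r → -u'' r + u r = u r ^ (2 * q - 1)) ∧
  u' 0 = 0 ∧ Tendsto u atTop (nhds 0)

lemma C2.const_mul {u u' u'' : ℝ → ℝ} (h : C2 u u' u'') (c : ℝ) :
    C2 (fun r => c * u r) (fun r => c * u' r) (fun r => c * u'' r) :=
  ⟨fun r hr => (h.1 r hr).const_mul c, fun r hr => (h.2.1 r hr).const_mul c,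
    continuousOn_const.mul h.2.2⟩

lemma coupled_rpow_mul_mul {q b A B x : ℝ} (hA : 0 < A) (hB : 0 < B) (hx : 0 < x) :
    (A * x) ^ (2 * q - 1) + b * (A * x) ^ (q - 1) * (B * x) ^ q =
      (A ^ (2 * q - 2) + b * A ^ (q - 2) * B ^ q) * A * x ^ (2 * q - 1) := by
  have hA₁ : A ^ (2 * q - 1) = A ^ (2 * q - 2) * A := by
    rw [← rpow_add_one hA.ne']; ring_nf
  have hA₂ : A ^ (q - 1) = A ^ (q - 2) * A := by
    rw [← rpow_add_one hA.ne']; ring_nf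
  have hx₂ : x ^ (q - 1) * x ^ q = x ^ (2 * q - 1) := by
    rw [← rpow_add hx]; ring_nf
  rw [mul_rpow hA.le hx.le, mul_rpow hA.le hx.le, mul_rpow hB.le hx.le, hA₁, hA₂, ← hx₂]
  ring

theorem IsPosSolScalar.isPosSolNLS1_const_mul {q b A B : ℝ} {u u' u'' : ℝ → ℝ}
    (hu : IsPosSolScalar q u u' u'') (hA : 0 < A) (hB : 0 < B)
    (hAB : A ^ (2 * q - 2) + b * A ^ (q - 2) * B ^ q = 1)
    (hBA : B ^ (2 * q - 2) + b * B ^ (q - 2) * A ^ q = 1) :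
    IsPosSolNLS1 q b (fun r => A * u r) (fun r => A * u' r) (fun r => A * u'' r)
      (fun r => B * u r) (fun r => B * u' r) (fun r => B * u'' r) := by
  obtain ⟨hC2, hpos, heq, hd, hlim⟩ := hu
  refine ⟨hC2.const_mul A, hC2.const_mul B,
    fun r hr => ⟨mul_pos hA (hpos r hr), mul_pos hB (hpos r hr)⟩, fun r hr => ?_, fun r hr => ?_,
    by simp [hd], by simp [hd], by simpa using hlim.const_mul A, by simpa using hlim.const_mul B⟩
  · rw [coupled_rpow_mul_mul hA hB (hpos r hr.le), hAB]
    linear_combination A * heq r hr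
  · rw [coupled_rpow_mul_mul hB hA (hpos r hr.le), hBA]
    linear_combination B * heq r hr

lemma coupled_rpow_scale_eq_one {q b s a c : ℝ} (hq : q ≠ 1) (hs : 0 < s) (ha : 0 < a)
    (hc : 0 < c) (h : a ^ (2 * q - 2) + b * a ^ (q - 2) * c ^ q = s) :
    (s ^ (-(1 / (2 * q - 2))) * a) ^ (2 * q - 2) +
      b * (s ^ (-(1 / (2 * q - 2))) * a) ^ (q - 2) * (s ^ (-(1 / (2 * q - 2))) * c) ^ q = 1 := by
  have hμ_pow : (s ^ (-(1 / (2 * q - 2)))) ^ (2 * q - 2) = s⁻¹ := by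
    rw [rpow_neg hs.le, one_div, inv_rpow (rpow_nonneg hs.le _),
      rpow_inv_rpow hs.le (by contrapose! hq; linarith)]
  set μ := s ^ (-(1 / (2 * q - 2)))
  have hμ : 0 < μ := rpow_pos_of_pos hs _
  have hμ_add : μ ^ (q - 2) * μ ^ q = μ ^ (2 * q - 2) := by
    rw [← rpow_add hμ]; ring_nf
  rw [mul_rpow hμ.le ha.le, mul_rpow hμ.le ha.le, mul_rpow hμ.le hc.le]
  calc μ ^ (2 * q - 2) * a ^ (2 * q - 2) + b * (μ ^ (q - 2) * a ^ (q - 2)) * (μ ^ q * c ^ q)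
      = μ ^ (2 * q - 2) * (a ^ (2 * q - 2) + b * a ^ (q - 2) * c ^ q) := by
        rw [← hμ_add]; ring
    _ = 1 := by rw [h, hμ_pow, inv_mul_cancel₀ hs.ne']

theorem three_distinct_solutions (q b k : ℝ)
    (hqb : (1 < q ∧ q < 2 ∧ 0 < b ∧ b < q - 1) ∨ (2 < q ∧ q - 1 < b))
    (hk : k ∈ Set.Ioo (0:ℝ) 1)
    (hkzero : 1 + b * k ^ q - b * k ^ (q - 2) - k ^ (2 * q - 2) = 0)
    (u₀ u₀' u₀'' : ℝ → ℝ)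
    (hu₀C2 : C2 u₀ u₀' u₀'')
    (hu₀pos : ∀ r : ℝ, 0 ≤ r → 0 < u₀ r)
    (hu₀eq : ∀ r : ℝ, 0 < r → -u₀'' r + u₀ r = u₀ r ^ (2 * q - 1))
    (hu₀' : u₀' 0 = 0) (hu₀lim : Tendsto u₀ atTop (nhds 0)) :
    IsPosSolNLS1 q b
      (fun r => (1 + b) ^ (-(1 / (2 * q - 2))) * u₀ r)
      (fun r => (1 + b) ^ (-(1 / (2 * q - 2))) * u₀' r)
      (fun r => (1 + b) ^ (-(1 / (2 * q - 2))) * u₀'' r)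
      (fun r => (1 + b) ^ (-(1 / (2 * q - 2))) * u₀ r)
      (fun r => (1 + b) ^ (-(1 / (2 * q - 2))) * u₀' r)
      (fun r => (1 + b) ^ (-(1 / (2 * q - 2))) * u₀'' r) ∧
    IsPosSolNLS1 q b
      (fun r => (1 + b * k ^ q) ^ (-(1 / (2 * q - 2))) * u₀ r)
      (fun r => (1 + b * k ^ q) ^ (-(1 / (2 * q - 2))) * u₀' r)
      (fun r => (1 + b * k ^ q) ^ (-(1 / (2 * q - 2))) * u₀'' r)
      (fun r => (1 + b * k ^ q) ^ (-(1 / (2 * q - 2))) * k * u₀ r)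
      (fun r => (1 + b * k ^ q) ^ (-(1 / (2 * q - 2))) * k * u₀' r)
      (fun r => (1 + b * k ^ q) ^ (-(1 / (2 * q - 2))) * k * u₀'' r) ∧
    IsPosSolNLS1 q b
      (fun r => (1 + b * k ^ q) ^ (-(1 / (2 * q - 2))) * k * u₀ r)
      (fun r => (1 + b * k ^ q) ^ (-(1 / (2 * q - 2))) * k * u₀' r)
      (fun r => (1 + b * k ^ q) ^ (-(1 / (2 * q - 2))) * k * u₀'' r)
      (fun r => (1 + b * k ^ q) ^ (-(1 / (2 * q - 2))) * u₀ r)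
      (fun r => (1 + b * k ^ q) ^ (-(1 / (2 * q - 2))) * u₀' r)
      (fun r => (1 + b * k ^ q) ^ (-(1 / (2 * q - 2))) * u₀'' r) ∧
    (∃ r : ℝ, 0 ≤ r ∧
      ((1 + b) ^ (-(1 / (2 * q - 2))) * u₀ r,
       (1 + b) ^ (-(1 / (2 * q - 2))) * u₀ r) ≠
      ((1 + b * k ^ q) ^ (-(1 / (2 * q - 2))) * u₀ r,
       (1 + b * k ^ q) ^ (-(1 / (2 * q - 2))) * k * u₀ r)) ∧
    (∃ r : ℝ, 0 ≤ r ∧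
      ((1 + b) ^ (-(1 / (2 * q - 2))) * u₀ r,
       (1 + b) ^ (-(1 / (2 * q - 2))) * u₀ r) ≠
      ((1 + b * k ^ q) ^ (-(1 / (2 * q - 2))) * k * u₀ r,
       (1 + b * k ^ q) ^ (-(1 / (2 * q - 2))) * u₀ r)) ∧
    (∃ r : ℝ, 0 ≤ r ∧
      ((1 + b * k ^ q) ^ (-(1 / (2 * q - 2))) * u₀ r,
       (1 + b * k ^ q) ^ (-(1 / (2 * q - 2))) * k * u₀ r) ≠
      ((1 + b * k ^ q) ^ (-(1 / (2 * q - 2))) * k * u₀ r,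
       (1 + b * k ^ q) ^ (-(1 / (2 * q - 2))) * u₀ r)) := by
  obtain ⟨hq, hb⟩ : 1 < q ∧ 0 < b := by
    rcases hqb with ⟨hq, -, hb, -⟩ | ⟨hq, hb⟩ <;> constructor <;> linarith
  obtain ⟨hk₀, hk₁⟩ := hk
  have hu₀ : IsPosSolScalar q u₀ u₀' u₀'' := ⟨hu₀C2, hu₀pos, hu₀eq, hu₀', hu₀lim⟩
  have hkq : b * k ^ q < b := mul_lt_of_lt_one_right hb (rpow_lt_one hk₀.le hk₁ (by linarith))
  have hs : 0 < 1 + b * k ^ q := by positivity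
  have hs₁ : 0 < 1 + b := by linarith
  have h₁ := coupled_rpow_scale_eq_one (b := b) hq.ne' hs₁ one_pos one_pos (by simp)
  have h₂ := coupled_rpow_scale_eq_one (b := b) hq.ne' hs one_pos hk₀ (by simp)
  have h₃ := coupled_rpow_scale_eq_one (b := b) hq.ne' hs hk₀ one_pos
    (by rw [one_rpow, mul_one]; linarith)
  set μ₁ := (1 + b) ^ (-(1 / (2 * q - 2)))
  set μ := (1 + b * k ^ q) ^ (-(1 / (2 * q - 2)))
  simp only [mul_one] at h₁ h₂ h₃
  have hμ : 0 < μ := rpow_pos_of_pos hs _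
  have hμ₁ : 0 < μ₁ := rpow_pos_of_pos hs₁ _
  have hμ₁μ : μ₁ < μ := rpow_lt_rpow_of_neg hs (by linarith) (by
    rw [neg_lt_zero]; exact one_div_pos.mpr (by linarith))
  have hμkμ : μ * k < μ := mul_lt_of_lt_one_right hμ hk₁
  have hx := (hu₀pos 0 le_rfl).ne'
  exact ⟨hu₀.isPosSolNLS1_const_mul hμ₁ hμ₁ h₁ h₁,
    hu₀.isPosSolNLS1_const_mul hμ (mul_pos hμ hk₀) h₂ h₃,
    hu₀.isPosSolNLS1_const_mul (mul_pos hμ hk₀) hμ h₃ h₂,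
    ⟨0, le_rfl, fun h => hμ₁μ.ne (mul_right_cancel₀ hx (congrArg Prod.fst h))⟩,
    ⟨0, le_rfl, fun h => hμ₁μ.ne (mul_right_cancel₀ hx (congrArg Prod.snd h))⟩,
    ⟨0, le_rfl, fun h => hμkμ.ne' (mul_right_cancel₀ hx (congrArg Prod.fst h))⟩⟩
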